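/- Let n ≥ 1, p > 1, α > 0, ψ₀ > 0. Let λ : [0,T] → ℝ be a differentiable positive function with λ'(t) ≥ αp·ψ(t)·λ(t), where ψ(t) = ψ₀/(1 - (2/n)·ψ₀·t) and 1 - (2/n)·ψ₀·t > 0 on [0,T]. Then the function t ↦ λ(t)·(ψ₀⁻¹ - (2/n)·t)^{αnp/2} is monotone nondecreasing on [0,T]. -/

import Mathlib

open Real Set

/-! With `b t = ψ₀⁻¹ - (2/n) t` one has `ψ = 1 / b` and `b' = -2/n`, so
`(λ b^c)' = b^(c-1) (λ' b - (2/n) c λ)`; for `c = α n p / 2` the factor `(2/n) c` is `α p`,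
and the hypothesis `λ' ≥ α p λ / b` is exactly the nonnegativity of this derivative. -/

section AffineWeight

variable {f f' : ℝ → ℝ} {β k c : ℝ}

theorem hasDerivAt_mul_rpow_affine {t : ℝ} (hf : HasDerivAt f (f' t) t) (hb : 0 < β - k * t) :
    HasDerivAt (fun t => f t * (β - k * t) ^ c)
      ((β - k * t) ^ c / (β - k * t) * (f' t * (β - k * t) - k * c * f t)) t := by
  have hlin : HasDerivAt (fun t : ℝ => β - k * t) (-k) t := by
    simpa using ((hasDerivAt_id t).const_mul k).const_sub β
  refine (hf.mul (hlin.rpow_const (p := c) (Or.inl hb.ne'))).congr_deriv ?_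
  rw [rpow_sub_one hb.ne']
  field_simp
  ring

theorem monotoneOn_mul_rpow_affine {s : Set ℝ} (hs : Convex ℝ s)
    (hf : ∀ t ∈ s, HasDerivAt f (f' t) t) (hb : ∀ t ∈ s, 0 < β - k * t)
    (hineq : ∀ t ∈ s, k * c * f t ≤ f' t * (β - k * t)) :
    MonotoneOn (fun t => f t * (β - k * t) ^ c) s := by
  have hF := fun t ht => hasDerivAt_mul_rpow_affine (c := c) (hf t ht) (hb t ht)
  refine monotoneOn_of_hasDerivWithinAt_nonneg hs
    (fun t ht => (hF t ht).continuousAt.continuousWithinAt)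
    (fun t ht => (hF t (interior_subset ht)).hasDerivWithinAt) fun t ht => ?_
  have ht := interior_subset ht
  exact mul_nonneg (div_nonneg (rpow_nonneg (hb t ht).le c) (hb t ht).le)
    (sub_nonneg.mpr (hineq t ht))

end AffineWeight

theorem stmt6_general (n : ℕ) (hn : 1 ≤ n) (T p α ψ₀ : ℝ)
    (hψ₀ : 0 < ψ₀)
    (lam lam' : ℝ → ℝ)
    (hderiv : ∀ t ∈ Icc (0:ℝ) T, HasDerivAt lam (lam' t) t)
    (hbar : ∀ t ∈ Icc (0:ℝ) T, 1 - (2 / (n:ℝ)) * ψ₀ * t > 0)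
    (hineq : ∀ t ∈ Icc (0:ℝ) T,
      lam' t ≥ α * p * (ψ₀ / (1 - (2 / (n:ℝ)) * ψ₀ * t)) * lam t) :
    MonotoneOn (fun t => lam t * (ψ₀⁻¹ - (2 / (n:ℝ)) * t) ^ (α * n * p / 2)) (Icc 0 T) := by
  have hn₀ : (n : ℝ) ≠ 0 := Nat.cast_ne_zero.mpr (by omega)
  have hrescale : ∀ t, ψ₀⁻¹ - (2 / (n:ℝ)) * t = (1 - (2 / (n:ℝ)) * ψ₀ * t) / ψ₀ := fun t => by
    field_simp
  have hb : ∀ t ∈ Icc (0:ℝ) T, 0 < ψ₀⁻¹ - (2 / (n:ℝ)) * t := fun t ht => by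
    rw [hrescale]; exact div_pos (hbar t ht) hψ₀
  refine monotoneOn_mul_rpow_affine (convex_Icc 0 T) hderiv hb fun t ht => ?_
  have hψ : ψ₀ / (1 - (2 / (n:ℝ)) * ψ₀ * t) = (ψ₀⁻¹ - (2 / (n:ℝ)) * t)⁻¹ := by
    rw [hrescale, inv_div]
  have h := hineq t ht
  rw [hψ, mul_right_comm, ← div_eq_mul_inv, ge_iff_le, div_le_iff₀ (hb t ht)] at h
  calc 2 / (n:ℝ) * (α * n * p / 2) * lam t = α * p * lam t := by field_simp
    _ ≤ _ := h

theorem stmt6 (n : ℕ) (hn : 1 ≤ n) (T p α ψ₀ : ℝ) (hT : 0 ≤ T) (hp : 1 < p)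
    (hα : 0 < α) (hψ₀ : 0 < ψ₀)
    (lam lam' : ℝ → ℝ)
    (hpos : ∀ t ∈ Icc (0:ℝ) T, 0 < lam t)
    (hderiv : ∀ t ∈ Icc (0:ℝ) T, HasDerivAt lam (lam' t) t)
    (hbar : ∀ t ∈ Icc (0:ℝ) T, 1 - (2 / (n:ℝ)) * ψ₀ * t > 0)
    (hineq : ∀ t ∈ Icc (0:ℝ) T,
      lam' t ≥ α * p * (ψ₀ / (1 - (2 / (n:ℝ)) * ψ₀ * t)) * lam t) :
    MonotoneOn (fun t => lam t * (ψ₀⁻¹ - (2 / (n:ℝ)) * t) ^ (α * n * p / 2)) (Icc 0 T) :=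
  stmt6_general n hn T p α ψ₀ hψ₀ lam lam' hderiv hbar hineq
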